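/- arXiv:2002.03440 — 4 statements merged into one kernel-verified Lean document; each statement's English description precedes it below -/
import Mathlib

section
/- Let α > 0, λ ∈ ℂ, and define f(x) = x·e^{λx}·v(-2λx) where v is twice differentiable. Then f satisfies the ODE -f''(x) + (2λα/x)f(x) + λ²f(x) = 0 on (0,1) if and only if v satisfies the Kummer (confluent hypergeometric) equation ξ v''(ξ) + (2-ξ) v'(ξ) - (1-α) v(ξ) = 0 at ξ = -2λx (for λ ≠ 0). -/
/-!
Write `u x = v (-2λx)`, so `u' = -2λ v'` and `u'' = 4λ² v''`. Two applications of the product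
rule give `(x e^{λx} u)'' = e^{λx} ((2λ + λ²x) u + (2 + 2λx) u' + x u'')`, and the factor `x` of
`f` cancels the singular coefficient `2λα/x`. Altogether
`-f'' + (2λα/x) f + λ² f = 2λ e^{λx} (ξ v'' + (2 - ξ) v' - (1 - α) v)` at `ξ = -2λx`,
and `2λ e^{λx} ≠ 0` when `λ ≠ 0`.
-/

open Set

def kummerOperator (a b : ℂ) (v v' v'' : ℂ → ℂ) (ξ : ℂ) : ℂ :=
  ξ * v'' ξ + (b - ξ) * v' ξ - a * v ξ

theorem HasDerivAt.comp_ofReal_const_mul {g : ℂ → ℂ} {g' c : ℂ} {x : ℝ}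
    (hg : HasDerivAt g g' (c * x)) : HasDerivAt (fun y : ℝ => g (c * y)) (c * g') x := by
  have hlin : HasDerivAt (fun w : ℂ => c * w) c x := by
    simpa using (hasDerivAt_id (x : ℂ)).const_mul c
  simpa [mul_comm] using (hg.comp (x : ℂ) hlin).comp_ofReal

theorem hasDerivAt_ofReal (x : ℝ) : HasDerivAt (fun y : ℝ => (y : ℂ)) 1 x :=
  (hasDerivAt_id (x : ℂ)).comp_ofReal

theorem hasDerivAt_exp_const_mul_ofReal (lam : ℂ) (x : ℝ) :
    HasDerivAt (fun y : ℝ => Complex.exp (lam * y)) (lam * Complex.exp (lam * x)) x := by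
  simpa [mul_comm] using (Complex.hasDerivAt_exp (lam * x)).comp_ofReal_const_mul

section ExpWeight

variable {lam : ℂ} {u u' u'' : ℝ → ℂ}

theorem hasDerivAt_ofReal_mul_exp_mul (hu : ∀ x, HasDerivAt u (u' x) x) (x : ℝ) :
    HasDerivAt (fun y : ℝ => y * Complex.exp (lam * y) * u y)
      (Complex.exp (lam * x) * ((1 + lam * x) * u x + x * u' x)) x := by
  have h := ((hasDerivAt_ofReal x).mul
    (hasDerivAt_exp_const_mul_ofReal lam x)).mul (hu x)
  exact h.congr_deriv (by simp only [Pi.mul_apply]; ring)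

theorem hasDerivAt_deriv_ofReal_mul_exp_mul (hu : ∀ x, HasDerivAt u (u' x) x)
    (hu' : ∀ x, HasDerivAt u' (u'' x) x) (x : ℝ) :
    HasDerivAt (fun y : ℝ => Complex.exp (lam * y) * ((1 + lam * y) * u y + y * u' y))
      (Complex.exp (lam * x) *
        ((2 * lam + lam ^ 2 * x) * u x + (2 + 2 * lam * x) * u' x + x * u'' x)) x := by
  have hX := hasDerivAt_ofReal x
  have h := (hasDerivAt_exp_const_mul_ofReal lam x).mul
    ((((hX.const_mul lam).const_add 1).mul (hu x)).add (hX.mul (hu' x)))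
  exact h.congr_deriv (by simp only [Pi.mul_apply, Pi.add_apply]; ring)

theorem deriv_deriv_ofReal_mul_exp_mul (hu : ∀ x, HasDerivAt u (u' x) x)
    (hu' : ∀ x, HasDerivAt u' (u'' x) x) (x : ℝ) :
    deriv (deriv fun y : ℝ => y * Complex.exp (lam * y) * u y) x =
      Complex.exp (lam * x) *
        ((2 * lam + lam ^ 2 * x) * u x + (2 + 2 * lam * x) * u' x + x * u'' x) := by
  rw [funext fun y => (hasDerivAt_ofReal_mul_exp_mul (lam := lam) hu y).deriv]
  exact (hasDerivAt_deriv_ofReal_mul_exp_mul hu hu' x).deriv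

end ExpWeight

theorem pencil_eq_exp_mul_kummerOperator (α : ℂ) (lam : ℂ) {v v' v'' : ℂ → ℂ}
    (hv : ∀ ξ, HasDerivAt v (v' ξ) ξ) (hv' : ∀ ξ, HasDerivAt v' (v'' ξ) ξ)
    {f : ℝ → ℂ} (hf : f = fun y : ℝ => y * Complex.exp (lam * y) * v (-2 * lam * y))
    {x : ℝ} (hx : x ≠ 0) :
    -(deriv (deriv f) x) + (2 * lam * α / x) * f x + lam ^ 2 * f x =
      2 * lam * Complex.exp (lam * x) * kummerOperator (1 - α) 2 v v' v'' (-2 * lam * x) := by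
  have hu : ∀ y : ℝ, HasDerivAt (fun y : ℝ => v (-2 * lam * y)) (-2 * lam * v' (-2 * lam * y)) y :=
    fun y => (hv _).comp_ofReal_const_mul
  have hu' : ∀ y : ℝ, HasDerivAt (fun y : ℝ => -2 * lam * v' (-2 * lam * y))
      (-2 * lam * (-2 * lam * v'' (-2 * lam * y))) y :=
    fun y => ((hv' _).comp_ofReal_const_mul).const_mul _
  have hx' : (x : ℂ) ≠ 0 := Complex.ofReal_ne_zero.mpr hx
  simp only [hf, deriv_deriv_ofReal_mul_exp_mul hu hu', kummerOperator]
  field_simp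
  ring

theorem kummer_substitution_general
    (α : ℝ) (lam : ℂ) (hlam : lam ≠ 0)
    (v v' v'' : ℂ → ℂ)
    (hv : ∀ ξ : ℂ, HasDerivAt v (v' ξ) ξ)
    (hv' : ∀ ξ : ℂ, HasDerivAt v' (v'' ξ) ξ)
    (f : ℝ → ℂ)
    (hf : f = fun x : ℝ => (x : ℂ) * Complex.exp (lam * x) * v (-2 * lam * x)) :
    ∀ x ∈ Ioo (0:ℝ) 1,
      (-(deriv (deriv f) x) + (2 * lam * α / (x : ℂ)) * f x + lam ^ 2 * f x = 0
        ↔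
       (-2 * lam * (x : ℂ)) * v'' (-2 * lam * x)
          + (2 - (-2 * lam * (x : ℂ))) * v' (-2 * lam * x)
          - (1 - (α : ℂ)) * v (-2 * lam * x) = 0) := by
  rintro x ⟨hx, -⟩
  rw [pencil_eq_exp_mul_kummerOperator α lam hv hv' hf hx.ne',
    mul_eq_zero_iff_left (mul_ne_zero (mul_ne_zero two_ne_zero hlam) (Complex.exp_ne_zero _))]
  rfl

/-- The substitution f(x) = x e^{λx} v(-2λx) transforms the quadratic pencil equation
-f'' + (2λα/x)f + λ²f = 0 into the Kummer equation ξv'' + (2-ξ)v' - (1-α)v = 0 at ξ = -2λx. -/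
theorem kummer_substitution
    (α : ℝ) (hα : 0 < α) (lam : ℂ) (hlam : lam ≠ 0)
    (v v' v'' : ℂ → ℂ)
    (hv : ∀ ξ : ℂ, HasDerivAt v (v' ξ) ξ)
    (hv' : ∀ ξ : ℂ, HasDerivAt v' (v'' ξ) ξ)
    (f : ℝ → ℂ)
    (hf : f = fun x : ℝ => (x : ℂ) * Complex.exp (lam * x) * v (-2 * lam * x)) :
    ∀ x ∈ Ioo (0:ℝ) 1,
      (-(deriv (deriv f) x) + (2 * lam * α / (x : ℂ)) * f x + lam ^ 2 * f x = 0
        ↔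
       (-2 * lam * (x : ℂ)) * v'' (-2 * lam * x)
          + (2 - (-2 * lam * (x : ℂ))) * v' (-2 * lam * x)
          - (1 - (α : ℂ)) * v (-2 * lam * x) = 0) :=
  kummer_substitution_general α lam hlam v v' v'' hv hv' f hf
end

section
/- Let n ∈ ℕ, μ < 0 a real number with L_n^{(1)}(-2μ) = 0, and define f(x) = x·e^{μx}·L_n^{(1)}(-2μx), where L_n^{(1)} is the associated Laguerre polynomial. Then f(0) = 0, f(1) = 0, and f satisfies -f''(x) + (2(n+1)μ/x)f(x) + μ²f(x) = 0 for all x ∈ (0,1). -/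
/-!
Writing `f x = exp (μ x) * Q x` with the polynomial `Q = X * L_n^{(1)}(-2μX)`, the factor
`exp (μ x)` absorbs the `μ²` term: `-f'' + μ² f = -exp (μ x) * (Q'' + 2μ Q')`. So the equation
reduces to the polynomial identity `X (Q'' + 2μ Q') = 2(n+1)μ Q`, which is `ξ` times the Laguerre
equation `ξ y'' + (2 - ξ) y' + n y = 0` at `ξ = -2μX`. The boundary values are `Q 0 = 0` and the
hypothesis that `-2μ` is a root.
-/

open Set

/-- The associated Laguerre polynomial L_n^{(β)}(z) = Σ_{k=0}^n (-1)^k C(n+β, n-k) z^k / k!. -/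
noncomputable def laguerre (β n : ℕ) (z : ℂ) : ℂ :=
  ∑ k ∈ Finset.range (n + 1),
    (-1 : ℂ) ^ k * ((n + β).choose (n - k) : ℂ) * z ^ k / (Nat.factorial k : ℂ)

open Polynomial

/-- Equal to `(-1)^k C(n+β, n-k) / k!` for `k ≤ n`; the form `C(n+β, k+β)` makes it vanish
for `k > n`, where truncated subtraction would give `n - k = 0`. -/
noncomputable def laguerreCoeff (β n k : ℕ) : ℂ :=
  (-1) ^ k * ((n + β).choose (k + β) : ℂ) / (k.factorial : ℂ)

noncomputable def laguerrePoly (β n : ℕ) : ℂ[X] :=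
  ∑ k ∈ Finset.range (n + 1), C (laguerreCoeff β n k) * X ^ k

lemma laguerreCoeff_eq_zero_of_lt {β n k : ℕ} (h : n < k) : laguerreCoeff β n k = 0 := by
  simp [laguerreCoeff, Nat.choose_eq_zero_of_lt (by omega : n + β < k + β)]

lemma coeff_laguerrePoly (β n k : ℕ) : (laguerrePoly β n).coeff k = laguerreCoeff β n k := by
  simp only [laguerrePoly, finsetSum_coeff, coeff_C_mul_X_pow, Finset.sum_ite_eq,
    Finset.mem_range, ite_eq_left_iff, not_lt]
  exact fun h => (laguerreCoeff_eq_zero_of_lt (by omega)).symm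

lemma eval_laguerrePoly (β n : ℕ) (z : ℂ) : (laguerrePoly β n).eval z = laguerre β n z := by
  simp only [laguerrePoly, laguerre, eval_finsetSum, eval_mul, eval_C, eval_pow, eval_X]
  refine Finset.sum_congr rfl fun k hk => ?_
  rw [laguerreCoeff, Nat.choose_symm_of_eq_add
    (by rw [Finset.mem_range] at hk; omega : n + β = (k + β) + (n - k))]
  ring

lemma laguerreCoeff_succ (β n k : ℕ) :
    ((k : ℂ) + 1) * ((k : ℂ) + 1 + β) * laguerreCoeff β n (k + 1)
      = ((k : ℂ) - n) * laguerreCoeff β n k := by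
  rcases lt_or_ge n k with hnk | hkn
  · simp [laguerreCoeff_eq_zero_of_lt hnk, laguerreCoeff_eq_zero_of_lt (hnk.trans k.lt_succ_self)]
  have hchoose := congrArg (Nat.cast : ℕ → ℂ) (Nat.choose_succ_right_eq (n + β) (k + β))
  push_cast [Nat.cast_sub (by omega : k + β ≤ n + β)] at hchoose
  simp only [laguerreCoeff, Nat.factorial_succ, pow_succ, add_right_comm k 1 β]
  push_cast
  field_simp
  rw [← neg_div]
  congr 1
  linear_combination -hchoose

lemma coeff_X_mul_derivative {R : Type*} [Semiring R] (p : R[X]) (m : ℕ) :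
    (X * derivative p).coeff m = p.coeff m * m := by
  rcases m with _ | m
  · simp
  · simp [coeff_X_mul, coeff_derivative]

lemma laguerrePoly_ode (β n : ℕ) :
    X * derivative (derivative (laguerrePoly β n))
      + (C ((β : ℂ) + 1) - X) * derivative (laguerrePoly β n) + C (n : ℂ) * laguerrePoly β n
      = 0 := by
  ext m
  simp only [sub_mul, coeff_add, coeff_sub, coeff_C_mul, coeff_X_mul_derivative, coeff_derivative,
    coeff_laguerrePoly, coeff_zero]
  linear_combination laguerreCoeff_succ β n m

lemma hasDerivAt_cexp_mul_eval (μ : ℂ) (Q : ℂ[X]) (x : ℝ) :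
    HasDerivAt (fun t : ℝ => Complex.exp (μ * t) * Q.eval (t : ℂ))
      (Complex.exp (μ * x) * (derivative Q + C μ * Q).eval (x : ℂ)) x := by
  have hexp : HasDerivAt (fun t : ℝ => Complex.exp (μ * t)) (Complex.exp (μ * x) * (μ * 1)) x :=
    (((hasDerivAt_id (x : ℂ)).const_mul μ).cexp).comp_ofReal
  refine (hexp.mul (Q.hasDerivAt (x : ℂ)).comp_ofReal).congr_deriv ?_
  simp only [eval_add, eval_mul, eval_C]
  ring

lemma deriv_cexp_mul_eval (μ : ℂ) (Q : ℂ[X]) :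
    deriv (fun t : ℝ => Complex.exp (μ * t) * Q.eval (t : ℂ))
      = fun t : ℝ => Complex.exp (μ * t) * (derivative Q + C μ * Q).eval (t : ℂ) :=
  funext fun x => (hasDerivAt_cexp_mul_eval μ Q x).deriv

noncomputable def laguerreEigenpoly (n : ℕ) (μ : ℂ) : ℂ[X] :=
  X * (laguerrePoly 1 n).comp (C (-2 * μ) * X)

lemma laguerreEigenpoly_ode (n : ℕ) (μ : ℂ) :
    X * (derivative (derivative (laguerreEigenpoly n μ))
        + C (2 * μ) * derivative (laguerreEigenpoly n μ))
      = C (2 * (n + 1) * μ) * laguerreEigenpoly n μ := by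
  have hode := congrArg (fun p => p.comp (C (-2 * μ) * X)) (laguerrePoly_ode 1 n)
  simp only [add_comp, mul_comp, sub_comp, X_comp, zero_comp, one_comp, natCast_comp,
    Nat.cast_one, map_add, map_one, map_natCast] at hode
  have h2μ : C (2 * μ) = -C (-2 * μ) := by rw [← map_neg, neg_mul, neg_neg]
  have hnμ : C (2 * (n + 1) * μ) = -(n + 1) * C (-2 * μ) := by
    rw [show 2 * ((n : ℂ) + 1) * μ = -(n + 1) * (-2 * μ) by ring, map_mul, map_neg, map_add,
      map_natCast, map_one]
  simp only [laguerreEigenpoly, derivative_mul, derivative_add, derivative_comp, derivative_X,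
    derivative_C, derivative_one, zero_mul, zero_add, h2μ, hnμ]
  linear_combination (C (-2 * μ) * X) * hode

theorem laguerre_eigenfunction_general
    (n : ℕ) (μ : ℝ)
    (hroot : laguerre 1 n (-2 * μ) = 0)
    (f : ℝ → ℂ)
    (hf : f = fun x : ℝ => (x : ℂ) * Complex.exp (μ * x) * laguerre 1 n (-2 * μ * x)) :
    f 0 = 0 ∧ f 1 = 0 ∧
      ∀ x ∈ Ioo (0:ℝ) 1,
        -(deriv (deriv f) x) + (2 * (n + 1) * μ / (x : ℂ)) * f x + (μ : ℂ) ^ 2 * f x = 0 := by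
  have hfQ : f = fun t : ℝ => Complex.exp (μ * t) * (laguerreEigenpoly n μ).eval (t : ℂ) := by
    rw [hf]
    funext t
    simp only [laguerreEigenpoly, eval_mul, eval_X, eval_comp, eval_C, eval_laguerrePoly]
    ring
  refine ⟨by simp [hf], by simpa [hf] using hroot, fun x hx => ?_⟩
  have hx0 : (x : ℂ) ≠ 0 := Complex.ofReal_ne_zero.mpr hx.1.ne'
  have hode := congrArg (eval (x : ℂ)) (laguerreEigenpoly_ode n μ)
  simp only [eval_mul, eval_add, eval_X, eval_C] at hode
  rw [hfQ, deriv_cexp_mul_eval, deriv_cexp_mul_eval]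
  simp only [derivative_add, derivative_C_mul, eval_add, eval_mul, eval_C]
  field_simp
  linear_combination -Complex.exp (μ * x) * hode

/-- For μ < 0 with L_n^{(1)}(-2μ) = 0, the function f(x) = x e^{μx} L_n^{(1)}(-2μx)
is a Dirichlet eigenfunction of the quadratic pencil T(μ) = -d²/dx² + 2(n+1)μ/x + μ². -/
theorem laguerre_eigenfunction
    (n : ℕ) (μ : ℝ) (hμ : μ < 0)
    (hroot : laguerre 1 n (-2 * μ) = 0)
    (f : ℝ → ℂ)
    (hf : f = fun x : ℝ => (x : ℂ) * Complex.exp (μ * x) * laguerre 1 n (-2 * μ * x)) :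
    f 0 = 0 ∧ f 1 = 0 ∧
      ∀ x ∈ Ioo (0:ℝ) 1,
        -(deriv (deriv f) x) + (2 * (n + 1) * μ / (x : ℂ)) * f x + (μ : ℂ) ^ 2 * f x = 0 :=
  laguerre_eigenfunction_general n μ hroot f hf
end

section
/- Let α > 0 and τ = -σ + iη with σ ∈ ℝ, η ∈ ℝ, η ≠ 0. For any pair (u,v) with u ∈ W_0^{1,2}((0,1)) ∩ W^{2,2}((0,1)), v ∈ W_0^{1,2}((0,1)) ∩ W^{2,2}((0,1)) and ‖u'‖_{L²}² + ‖v‖_{L²}² = 1, define G(u,v) = (v, u'' - (2α/x)v) and N = ‖(G - τ)(u,v)‖ where the norm is (‖·'‖_{L²}² + ‖·‖_{L²}²)^{1/2} applied componentwise as ‖(φ₁,φ₂)‖² = ‖φ₁'‖² + ‖φ₂‖². Then N ≥ (α - σ)/(1 + 3α/|η|). -/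
open MeasureTheory Set
open scoped InnerProductSpace ComplexConjugate

/-!
Pair the residual `(f, g) = (G - τ)(u, v)` with `(u', v)` in `L²`. After integrating by parts,
`⟨u', f⟩ + ⟨v, g⟩ = conj z - z - ∫ (2α/x)|v|² - τ` with `z = ⟨v', u'⟩`, and by Cauchy–Schwarz this
number has modulus at most `N`. Its real part gives `2α‖v‖² - σ ≤ N`, its imaginary part
`|2 Im z + η| ≤ N`, and the first pairing alone gives `|Im z + η‖u'‖²| ≤ N`. Eliminating `Im z`
yields `|η|(1 - 2‖v‖²) ≤ 3N`, and combining with the real part and `‖u'‖² + ‖v‖² = 1` gives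
`(α - σ)|η| ≤ N(|η| + 3α)`.
-/

theorem norm_inner_add_inner_le {𝕜 E : Type*} [RCLike 𝕜] [NormedAddCommGroup E]
    [InnerProductSpace 𝕜 E] (p q x y : E) :
    ‖⟪p, x⟫_𝕜 + ⟪q, y⟫_𝕜‖ ≤ √(‖p‖ ^ 2 + ‖q‖ ^ 2) * √(‖x‖ ^ 2 + ‖y‖ ^ 2) := by
  rw [← Real.sqrt_mul (by positivity)]
  calc ‖⟪p, x⟫_𝕜 + ⟪q, y⟫_𝕜‖ ≤ ‖p‖ * ‖x‖ + ‖q‖ * ‖y‖ :=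
        (norm_add_le _ _).trans (add_le_add (norm_inner_le_norm p x) (norm_inner_le_norm q y))
    _ ≤ √((‖p‖ ^ 2 + ‖q‖ ^ 2) * (‖x‖ ^ 2 + ‖y‖ ^ 2)) :=
        Real.le_sqrt_of_sq_le (by nlinarith [sq_nonneg (‖p‖ * ‖y‖ - ‖q‖ * ‖x‖)])

theorem aestronglyMeasurable_of_hasDerivAt {F : Type*} [NormedAddCommGroup F] [NormedSpace ℝ F]
    [CompleteSpace F] {f f' : ℝ → F} {s : Set ℝ} (hs : MeasurableSet s)
    (hf : ∀ x ∈ s, HasDerivAt f (f' x) x) : AEStronglyMeasurable f' (volume.restrict s) :=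
  (aestronglyMeasurable_deriv f _).congr <|
    (ae_restrict_iff' hs).2 (Filter.Eventually.of_forall fun x hx => (hf x hx).deriv)

theorem integral_Ioo_conj_mul_deriv_eq_neg {f f' g g' : ℝ → ℂ} {a b : ℝ} (hab : a ≤ b)
    (hf : ContinuousOn f (Icc a b)) (hg : ContinuousOn g (Icc a b))
    (hff' : ∀ x ∈ Ioo a b, HasDerivAt f (f' x) x) (hgg' : ∀ x ∈ Ioo a b, HasDerivAt g (g' x) x)
    (hf' : IntegrableOn f' (Ioo a b)) (hg' : IntegrableOn g' (Ioo a b))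
    (hga : g a = 0) (hgb : g b = 0) :
    ∫ x in Ioo a b, conj (g x) * f' x = -∫ x in Ioo a b, conj (g' x) * f x := by
  have hint : ∀ {h : ℝ → ℂ}, IntegrableOn h (Ioo a b) → IntervalIntegrable h volume a b :=
    (intervalIntegrable_iff_integrableOn_Ioo_of_le hab).2
  have key := intervalIntegral.integral_mul_deriv_eq_deriv_mul_of_hasDerivAt
    (u := fun x => conj (g x)) (u' := fun x => conj (g' x)) (v := f)
    (by rw [uIcc_of_le hab]; exact Complex.continuous_conj.comp_continuousOn hg)
    (by rwa [uIcc_of_le hab])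
    (fun x hx => by
      rw [min_eq_left hab, max_eq_right hab] at hx
      simpa only [← Complex.star_def] using (hgg' x hx).star)
    (by rwa [min_eq_left hab, max_eq_right hab])
    (hint (Complex.conjLIE.integrable_comp_iff.2 hg')) (hint hf')
  simpa [hga, hgb, intervalIntegral.integral_of_le hab, integral_Ioc_eq_integral_Ioo] using key

namespace MeasureTheory.MemLp

variable {X 𝕜 E : Type*} [MeasurableSpace X] {μ : Measure X} [RCLike 𝕜]
  [NormedAddCommGroup E]

theorem inner_toLp_eq_integral [InnerProductSpace 𝕜 E] {f g : X → E} (hf : MemLp f 2 μ)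
    (hg : MemLp g 2 μ) : ⟪hf.toLp f, hg.toLp g⟫_𝕜 = ∫ x, ⟪f x, g x⟫_𝕜 ∂μ :=
  integral_congr_ae <| by
    filter_upwards [hf.coeFn_toLp, hg.coeFn_toLp] with x hfx hgx
    rw [hfx, hgx]

theorem norm_toLp_sq_eq_integral [InnerProductSpace ℝ E] {f : X → E} (hf : MemLp f 2 μ) :
    ‖hf.toLp f‖ ^ 2 = ∫ x, ‖f x‖ ^ 2 ∂μ := by
  simp only [← real_inner_self_eq_norm_sq, inner_toLp_eq_integral]

theorem inner_toLp_eq_ofReal_integral {f g : X → 𝕜} {ω : X → ℝ} (hf : MemLp f 2 μ)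
    (hg : MemLp g 2 μ) (hgf : ∀ᵐ x ∂μ, g x = ω x * f x) :
    ⟪hf.toLp f, hg.toLp g⟫_𝕜 = ((∫ x, ω x * ‖f x‖ ^ 2 ∂μ : ℝ) : 𝕜) := by
  rw [inner_toLp_eq_integral, ← integral_ofReal]
  refine integral_congr_ae ?_
  filter_upwards [hgf] with x hx
  rw [hx, RCLike.inner_apply', mul_left_comm, RCLike.conj_mul]
  push_cast; rfl

theorem mul_norm_toLp_sq_le_re_inner {f g : X → 𝕜} {ω : X → ℝ} {k : ℝ} (hf : MemLp f 2 μ)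
    (hg : MemLp g 2 μ) (hgf : ∀ᵐ x ∂μ, g x = ω x * f x) (hk : ∀ᵐ x ∂μ, k ≤ ω x) :
    k * ‖hf.toLp f‖ ^ 2 ≤ RCLike.re ⟪hf.toLp f, hg.toLp g⟫_𝕜 := by
  have hshift := inner_toLp_eq_ofReal_integral hf (hg.sub (hf.const_smul (k : 𝕜)))
    (ω := fun x => ω x - k) (by
      filter_upwards [hgf] with x hx
      rw [Pi.sub_apply, Pi.smul_apply, hx, smul_eq_mul]; push_cast; ring)
  rw [MemLp.toLp_sub hg (hf.const_smul _), MemLp.toLp_const_smul _ hf, inner_sub_right,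
    inner_smul_right, inner_self_eq_norm_sq_to_K, ← RCLike.ofReal_pow,
    ← RCLike.ofReal_mul] at hshift
  have hnonneg : 0 ≤ ∫ x, (ω x - k) * ‖f x‖ ^ 2 ∂μ := integral_nonneg_of_ae <| by
    filter_upwards [hk] with x hx using mul_nonneg (sub_nonneg.2 hx) (sq_nonneg _)
  have := congrArg RCLike.re hshift
  rw [map_sub, RCLike.ofReal_re, RCLike.ofReal_re] at this
  linarith

end MeasureTheory.MemLp

theorem resolvent_lower_bound_of_estimates {α σ η a b m N : ℝ} (hα : 0 < α) (hη : η ≠ 0)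
    (ha : 0 ≤ a) (hab : a + b = 1) (hre : 2 * α * b - σ ≤ N) (him : |2 * m + η| ≤ N)
    (him₁ : |m + η * a| ≤ N) :
    (α - σ) / (1 + 3 * α / |η|) ≤ N := by
  have hη' : 0 < |η| := abs_pos.mpr hη
  have hm : 2 * |m| ≤ N + |η| := by
    have := abs_sub_abs_le_abs_sub (2 * m) (-η)
    rw [abs_mul, abs_two, abs_neg, sub_neg_eq_add] at this
    linarith
  have ha' : |η| * a ≤ N + |m| := by
    have := abs_sub_abs_le_abs_sub (η * a) (-m)
    rw [abs_mul, abs_of_nonneg ha, abs_neg, sub_neg_eq_add, add_comm] at this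
    linarith
  have hb : |η| - 3 * N ≤ 2 * |η| * b := by nlinarith
  rw [show 1 + 3 * α / |η| = (|η| + 3 * α) / |η| by field_simp, div_div_eq_mul_div,
    div_le_iff₀ (by positivity)]
  nlinarith [mul_le_mul_of_nonneg_left hb hα.le]

-- `p, q, p', r, w` play the roles of `u', v, v', u'', (2α/x) v`.
theorem InnerProductSpace.resolvent_lower_bound {E : Type*} [NormedAddCommGroup E]
    [InnerProductSpace ℂ E] {α σ η : ℝ} (hα : 0 < α) (hη : η ≠ 0) {τ : ℂ}
    (hτ : τ = -(σ : ℂ) + (η : ℂ) * Complex.I) {p q p' r w : E}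
    (hnorm : ‖p‖ ^ 2 + ‖q‖ ^ 2 = 1) (hibp : ⟪q, r⟫_ℂ = -⟪p', p⟫_ℂ)
    (hw_im : (⟪q, w⟫_ℂ).im = 0) (hw_re : 2 * α * ‖q‖ ^ 2 ≤ (⟪q, w⟫_ℂ).re) :
    (α - σ) / (1 + 3 * α / |η|) ≤ √(‖p' - τ • p‖ ^ 2 + ‖r - w - τ • q‖ ^ 2) := by
  set N := √(‖p' - τ • p‖ ^ 2 + ‖r - w - τ • q‖ ^ 2)
  have hinner₁ : ⟪p, p' - τ • p⟫_ℂ = conj ⟪p', p⟫_ℂ - τ * ((‖p‖ ^ 2 : ℝ) : ℂ) := by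
    rw [inner_sub_right, inner_smul_right, inner_conj_symm, inner_self_eq_norm_sq_to_K]
    push_cast; rfl
  have hinner₂ : ⟪q, r - w - τ • q⟫_ℂ = -⟪p', p⟫_ℂ - ⟪q, w⟫_ℂ - τ * ((‖q‖ ^ 2 : ℝ) : ℂ) := by
    rw [inner_sub_right, inner_sub_right, inner_smul_right, hibp, inner_self_eq_norm_sq_to_K]
    push_cast; rfl
  have hfirst : ‖⟪p, p' - τ • p⟫_ℂ‖ ≤ N := by
    have hp : ‖p‖ ≤ 1 := by nlinarith [norm_nonneg p, sq_nonneg ‖q‖]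
    calc ‖⟪p, p' - τ • p⟫_ℂ‖ ≤ ‖p‖ * ‖p' - τ • p‖ := norm_inner_le_norm _ _
      _ ≤ ‖p' - τ • p‖ := mul_le_of_le_one_left (norm_nonneg _) hp
      _ ≤ N := Real.le_sqrt_of_sq_le (le_add_of_nonneg_right (sq_nonneg _))
  have hsum : ‖⟪p, p' - τ • p⟫_ℂ + ⟪q, r - w - τ • q⟫_ℂ‖ ≤ N := by
    simpa only [hnorm, Real.sqrt_one, one_mul] using
      norm_inner_add_inner_le (𝕜 := ℂ) p q (p' - τ • p) (r - w - τ • q)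
  rw [hinner₁, hinner₂] at hsum
  rw [hinner₁] at hfirst
  have hτre : τ.re = -σ := by simp [hτ]
  have hτim : τ.im = η := by simp [hτ]
  set z := ⟪p', p⟫_ℂ
  set a := ‖p‖ ^ 2
  set b := ‖q‖ ^ 2
  refine resolvent_lower_bound_of_estimates hα hη (sq_nonneg ‖p‖) hnorm (m := z.im) ?_ ?_ ?_
  · calc 2 * α * b - σ ≤ -(conj z - τ * a + (-z - ⟪q, w⟫_ℂ - τ * b)).re := by
          simp only [Complex.add_re, Complex.sub_re, Complex.neg_re, Complex.conj_re,
            Complex.re_mul_ofReal, hτre]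
          linear_combination hw_re + σ * hnorm
      _ ≤ N := (neg_le_abs _).trans ((Complex.abs_re_le_norm _).trans hsum)
  · calc |2 * z.im + η| = |(conj z - τ * a + (-z - ⟪q, w⟫_ℂ - τ * b)).im| := by
          rw [← abs_neg]
          simp only [Complex.add_im, Complex.sub_im, Complex.neg_im, Complex.conj_im,
            Complex.im_mul_ofReal, hτim, hw_im]
          congr 1; linear_combination η * hnorm
      _ ≤ N := (Complex.abs_im_le_norm _).trans hsum
  · calc |z.im + η * a| = |(conj z - τ * a).im| := by
          rw [← abs_neg, Complex.sub_im, Complex.conj_im, Complex.im_mul_ofReal, hτim]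
          congr 1; ring
      _ ≤ N := (Complex.abs_im_le_norm _).trans hfirst

theorem resolvent_lower_bound
    (α σ η : ℝ) (hα : 0 < α) (hη : η ≠ 0)
    (τ : ℂ) (hτ : τ = -(σ : ℂ) + (η : ℂ) * Complex.I)
    (u' u'' v v' : ℝ → ℂ)
    (hucont' : ContinuousOn u' (Icc 0 1))
    (hvcont : ContinuousOn v (Icc 0 1))
    (huderiv' : ∀ x ∈ Ioo (0:ℝ) 1, HasDerivAt u' (u'' x) x)
    (hvderiv : ∀ x ∈ Ioo (0:ℝ) 1, HasDerivAt v (v' x) x)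
    (hv0 : v 0 = 0) (hv1 : v 1 = 0)
    (hL2u' : IntegrableOn (fun x => ‖u' x‖^2) (Ioo 0 1))
    (hL2u'' : IntegrableOn (fun x => ‖u'' x‖^2) (Ioo 0 1))
    (hL2v : IntegrableOn (fun x => ‖v x‖^2) (Ioo 0 1))
    (hL2v' : IntegrableOn (fun x => ‖v' x‖^2) (Ioo 0 1))
    (hL2av : IntegrableOn (fun x : ℝ => ‖(2 * α / (x:ℂ)) * v x‖^2) (Ioo 0 1))
    (hnorm : (∫ x in Ioo (0:ℝ) 1, ‖u' x‖^2) + (∫ x in Ioo (0:ℝ) 1, ‖v x‖^2) = 1)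
    (N : ℝ)
    (hN : N = Real.sqrt
      ((∫ x in Ioo (0:ℝ) 1, ‖v' x - τ * u' x‖^2)
        + ∫ x in Ioo (0:ℝ) 1, ‖u'' x - (2 * α / (x:ℂ)) * v x - τ * v x‖^2)) :
    (α - σ) / (1 + 3 * α / |η|) ≤ N := by
  have hs : MeasurableSet (Ioo (0:ℝ) 1) := measurableSet_Ioo
  have memL2 {f : ℝ → ℂ} (hf : AEStronglyMeasurable f (volume.restrict (Ioo 0 1)))
      (hf2 : Integrable (fun x => ‖f x‖ ^ 2) (volume.restrict (Ioo 0 1))) :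
      MemLp f 2 (volume.restrict (Ioo 0 1)) :=
    (memLp_two_iff_integrable_sq_norm hf).2 hf2
  have hu' := memL2 ((hucont'.mono Ioo_subset_Icc_self).aestronglyMeasurable hs) hL2u'
  have hv := memL2 ((hvcont.mono Ioo_subset_Icc_self).aestronglyMeasurable hs) hL2v
  have hv' := memL2 (aestronglyMeasurable_of_hasDerivAt hs hvderiv) hL2v'
  have hu'' := memL2 (aestronglyMeasurable_of_hasDerivAt hs huderiv') hL2u''
  have hw := memL2
    ((by fun_prop : Measurable fun x : ℝ => 2 * α / (x : ℂ)).aestronglyMeasurable.mul hv.1) hL2av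
  have hweight : ∀ᵐ (x : ℝ) ∂volume.restrict (Ioo (0:ℝ) 1),
      2 * α / (x : ℂ) * v x = ((2 * α / x : ℝ) : ℂ) * v x :=
    ae_of_all _ fun x => by push_cast; rfl
  have hweight_ge : ∀ᵐ x ∂volume.restrict (Ioo (0:ℝ) 1), 2 * α ≤ 2 * α / x :=
    (ae_restrict_iff' hs).2 (ae_of_all _ fun x hx => le_div_self (by positivity) hx.1 hx.2.le)
  have hibp : ⟪hv.toLp v, hu''.toLp u''⟫_ℂ = -⟪hv'.toLp v', hu'.toLp u'⟫_ℂ := by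
    simp only [MemLp.inner_toLp_eq_integral, RCLike.inner_apply']
    exact integral_Ioo_conj_mul_deriv_eq_neg zero_le_one hucont' hvcont huderiv' hvderiv
      (hu''.integrable one_le_two) (hv'.integrable one_le_two) hv0 hv1
  have key := InnerProductSpace.resolvent_lower_bound hα hη hτ
    (by rwa [hu'.norm_toLp_sq_eq_integral, hv.norm_toLp_sq_eq_integral]) hibp
    (by rw [hv.inner_toLp_eq_ofReal_integral hw hweight]; exact Complex.ofReal_im _)
    (hv.mul_norm_toLp_sq_le_re_inner hw hweight hweight_ge)
  rw [← MemLp.toLp_const_smul, ← MemLp.toLp_sub, ← MemLp.toLp_const_smul, ← MemLp.toLp_sub,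
    ← MemLp.toLp_sub, MemLp.norm_toLp_sq_eq_integral, MemLp.norm_toLp_sq_eq_integral] at key
  rw [hN]
  exact key
end

section
/- Let λ ∈ ℂ with λ ≠ 0 and let M(a,b,z) denote the Kummer confluent hypergeometric function. Then the function f_λ(x) = x e^{λx} M(1-α, 2, -2λx) satisfies f_λ(0) = 0 and solves the ODE -f'' + (2λα/x)f + λ²f = 0 on (0,1); moreover f_λ(1) = 0 if and only if M(1-α, 2, -2λ) = 0. -/
/-!
The Kummer coefficients are bounded by `C * D ^ k / k !`, a majorant that survives termwise
differentiation; hence `M(a, b, ·)` is entire, can be differentiated term by term, and the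
recursion `(k + 1) (b + k) c (k + 1) = (a + k) c k` of its coefficients is exactly Kummer's
equation `z u'' + (b - z) u' - a u = 0`. For `f z = z e^{λz} u (-2λz)` one computes
`-f'' + (2λα / z) f + λ² f = 2λ e^{λz} (ζ u'' + (2 - ζ) u' - (1 - α) u)` at `ζ = -2λz`,
which vanishes by Kummer's equation. The boundary statements hold because `e^λ ≠ 0`.
-/

open Set

/-- The Kummer confluent hypergeometric function M(a,b,z) = Σ_{k≥0} (a)_k z^k / ((b)_k k!). -/
noncomputable def kummerM (a b z : ℂ) : ℂ :=
  ∑' k : ℕ,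
    (∏ i ∈ Finset.range k, (a + i)) /
      ((∏ i ∈ Finset.range k, (b + i)) * (Nat.factorial k : ℂ)) * z ^ k

open Finset
open scoped Nat

def derivCoeff (c : ℕ → ℂ) (k : ℕ) : ℂ := (k + 1) * c (k + 1)

def FactorialBounded (c : ℕ → ℂ) : Prop := ∃ C D : ℝ, ∀ k, ‖c k‖ ≤ C * D ^ k / k !

namespace FactorialBounded

variable {c : ℕ → ℂ}

theorem exists_summable_bound (hc : FactorialBounded c) (R : ℝ) :
    ∃ v : ℕ → ℝ, Summable v ∧ ∀ k (z : ℂ), ‖z‖ ≤ R → ‖c k * z ^ k‖ ≤ v k := by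
  obtain ⟨C, D, hCD⟩ := hc
  refine ⟨fun k => C * ((D * R) ^ k / k !), (Real.summable_pow_div_factorial _).mul_left C,
    fun k z hz => ?_⟩
  calc ‖c k * z ^ k‖ = ‖c k‖ * ‖z‖ ^ k := by rw [norm_mul, norm_pow]
    _ ≤ C * D ^ k / k ! * R ^ k :=
      mul_le_mul (hCD k) (pow_le_pow_left₀ (norm_nonneg z) hz k) (by positivity)
        ((norm_nonneg _).trans (hCD k))
    _ = C * ((D * R) ^ k / k !) := by ring

theorem summable (hc : FactorialBounded c) (z : ℂ) : Summable fun k => c k * z ^ k :=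
  let ⟨_, hv, hbound⟩ := hc.exists_summable_bound ‖z‖
  .of_norm_bounded hv fun k => hbound k z le_rfl

theorem derivCoeff (hc : FactorialBounded c) : FactorialBounded (derivCoeff c) := by
  obtain ⟨C, D, hCD⟩ := hc
  refine ⟨C * D, D, fun k => ?_⟩
  have hk : (k + 1 : ℂ) = ((k + 1 : ℕ) : ℂ) := by push_cast; ring
  calc ‖_root_.derivCoeff c k‖ = (k + 1) * ‖c (k + 1)‖ := by
        rw [_root_.derivCoeff, norm_mul, hk, Complex.norm_natCast]; push_cast; ring
    _ ≤ (k + 1) * (C * D ^ (k + 1) / (k + 1) !) := by gcongr; exact hCD _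
    _ = C * D * D ^ k / k ! := by
      rw [Nat.factorial_succ]; push_cast; field_simp; ring

theorem hasDerivAt_tsum (hc : FactorialBounded c) (z : ℂ) :
    HasDerivAt (fun w => ∑' k, c k * w ^ k) (∑' k, _root_.derivCoeff c k * z ^ k) z := by
  have hshift : (fun w => ∑' k, c k * w ^ k) = fun w => c 0 + ∑' k, c (k + 1) * w ^ (k + 1) :=
    funext fun w => by simpa using (hc.summable w).tsum_eq_zero_add
  obtain ⟨v, hv, hbound⟩ := hc.derivCoeff.exists_summable_bound (‖z‖ + 1)
  rw [hshift]
  refine (hasDerivAt_tsum_of_isPreconnected hv Metric.isOpen_ball (convex_ball 0 _).isPreconnected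
    (fun k w _ => ?_) (fun k w hw => hbound k w ?_) (Metric.mem_ball_self (by positivity)) ?_
    (mem_ball_zero_iff.2 (lt_add_one _))).const_add (c 0)
  · refine ((hasDerivAt_pow (k + 1) w).const_mul (c (k + 1))).congr_deriv ?_
    simp only [_root_.derivCoeff, Nat.add_sub_cancel]; push_cast; ring
  · exact (mem_ball_zero_iff.1 hw).le
  · simp

theorem deriv_tsum (hc : FactorialBounded c) :
    deriv (fun w => ∑' k, c k * w ^ k) = fun z => ∑' k, _root_.derivCoeff c k * z ^ k :=
  funext fun z => (hc.hasDerivAt_tsum z).deriv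

theorem differentiable_tsum (hc : FactorialBounded c) :
    Differentiable ℂ fun w => ∑' k, c k * w ^ k :=
  fun z => (hc.hasDerivAt_tsum z).differentiableAt

end FactorialBounded

noncomputable def kummerCoeff (a b : ℂ) (k : ℕ) : ℂ :=
  (∏ i ∈ range k, (a + i)) / ((∏ i ∈ range k, (b + i)) * k !)

theorem kummerM_eq_tsum (a b : ℂ) : kummerM a b = fun z => ∑' k, kummerCoeff a b k * z ^ k := rfl

theorem norm_prod_add_natCast_le (a : ℂ) (k : ℕ) :
    ‖∏ i ∈ range k, (a + i)‖ ≤ (‖a‖ + 1) ^ k * k ! := by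
  rw [norm_prod, ← prod_range_add_one_eq_factorial, Nat.cast_prod,
    show (‖a‖ + 1) ^ k = ∏ _i ∈ range k, (‖a‖ + 1) by simp, ← prod_mul_distrib]
  refine prod_le_prod (fun _ _ => norm_nonneg _) fun i _ => ?_
  calc ‖a + i‖ ≤ ‖a‖ + i := by simpa using norm_add_le a i
    _ ≤ (‖a‖ + 1) * ((i + 1 : ℕ) : ℝ) := by
      push_cast
      nlinarith [norm_nonneg a, (i.cast_nonneg : (0 : ℝ) ≤ i)]

theorem natCast_add_one_le_norm_add {b : ℂ} (hb : 1 ≤ b.re) (i : ℕ) : (i : ℝ) + 1 ≤ ‖b + i‖ :=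
  calc (i : ℝ) + 1 ≤ (b + i).re := by
        simp only [Complex.add_re, Complex.natCast_re]; linarith
    _ ≤ ‖b + i‖ := Complex.re_le_norm _

theorem factorial_le_norm_prod_add_natCast {b : ℂ} (hb : 1 ≤ b.re) (k : ℕ) :
    (k ! : ℝ) ≤ ‖∏ i ∈ range k, (b + i)‖ := by
  rw [norm_prod, ← prod_range_add_one_eq_factorial, Nat.cast_prod]
  exact prod_le_prod (fun _ _ => by positivity) fun i _ => by
    exact_mod_cast natCast_add_one_le_norm_add hb i

theorem kummerCoeff_succ {b : ℂ} (hb : 1 ≤ b.re) (a : ℂ) (k : ℕ) :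
    (k + 1) * (b + k) * kummerCoeff a b (k + 1) = (a + k) * kummerCoeff a b k := by
  have hprod : ∏ i ∈ range k, (b + i) ≠ 0 :=
    norm_pos_iff.1 ((Nat.cast_pos.2 k.factorial_pos).trans_le
      (factorial_le_norm_prod_add_natCast hb k))
  have hbk : b + k ≠ 0 :=
    norm_pos_iff.1 ((by positivity : (0 : ℝ) < k + 1).trans_le (natCast_add_one_le_norm_add hb k))
  simp only [kummerCoeff, prod_range_succ, Nat.factorial_succ]
  push_cast
  field_simp

theorem factorialBounded_kummerCoeff {b : ℂ} (hb : 1 ≤ b.re) (a : ℂ) :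
    FactorialBounded (kummerCoeff a b) := by
  refine ⟨1, ‖a‖ + 1, fun k => ?_⟩
  have hfact : (0 : ℝ) < k ! := Nat.cast_pos.2 k.factorial_pos
  rw [kummerCoeff, norm_div, norm_mul, Complex.norm_natCast, div_le_iff₀ (by
    nlinarith [factorial_le_norm_prod_add_natCast hb k])]
  calc ‖∏ i ∈ range k, (a + i)‖ ≤ (‖a‖ + 1) ^ k * k ! := norm_prod_add_natCast_le a k
    _ ≤ (‖a‖ + 1) ^ k / k ! * (‖∏ i ∈ range k, (b + i)‖ * k !) := by
      rw [div_mul_eq_mul_div, mul_div_assoc, mul_div_cancel_right₀ _ hfact.ne']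
      exact mul_le_mul_of_nonneg_left (factorial_le_norm_prod_add_natCast hb k) (by positivity)
    _ = 1 * (‖a‖ + 1) ^ k / k ! * (‖∏ i ∈ range k, (b + i)‖ * k !) := by ring

theorem differentiable_kummerM {b : ℂ} (hb : 1 ≤ b.re) (a : ℂ) : Differentiable ℂ (kummerM a b) :=
  (factorialBounded_kummerCoeff hb a).differentiable_tsum

theorem differentiable_deriv_kummerM {b : ℂ} (hb : 1 ≤ b.re) (a : ℂ) :
    Differentiable ℂ (deriv (kummerM a b)) := by
  rw [kummerM_eq_tsum, (factorialBounded_kummerCoeff hb a).deriv_tsum]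
  exact (factorialBounded_kummerCoeff hb a).derivCoeff.differentiable_tsum

theorem kummerM_ode {b : ℂ} (hb : 1 ≤ b.re) (a z : ℂ) :
    z * deriv (deriv (kummerM a b)) z + (b - z) * deriv (kummerM a b) z
      - a * kummerM a b z = 0 := by
  set c := kummerCoeff a b
  have hc : FactorialBounded c := factorialBounded_kummerCoeff hb a
  rw [kummerM_eq_tsum, hc.deriv_tsum, hc.derivCoeff.deriv_tsum]
  have hU1 := (hc.derivCoeff.summable z).tsum_eq_zero_add
  have hU := (hc.summable z).tsum_eq_zero_add
  -- the coefficient of `z ^ (k + 1)` once the constant terms of `u` and `u'` are split off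
  have hshifted : ∀ k, z * (derivCoeff (derivCoeff c) k * z ^ k)
      + b * (derivCoeff c (k + 1) * z ^ (k + 1)) - z * (derivCoeff c k * z ^ k)
      - a * (c (k + 1) * z ^ (k + 1)) = 0 := fun k => by
    have hrec := kummerCoeff_succ hb a (k + 1)
    simp only [derivCoeff]
    push_cast at hrec ⊢
    linear_combination z ^ (k + 1) * hrec
  have hsum := ((((hc.derivCoeff.derivCoeff.summable z).hasSum.mul_left z).add
    (((summable_nat_add_iff 1).2 (hc.derivCoeff.summable z)).hasSum.mul_left b)).sub
    ((hc.derivCoeff.summable z).hasSum.mul_left z)).sub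
    (((summable_nat_add_iff 1).2 (hc.summable z)).hasSum.mul_left a)
  simp only [hshifted] at hsum
  have h0 : b * derivCoeff c 0 = a * c 0 := by
    simpa [derivCoeff] using kummerCoeff_succ hb a 0
  simp only [pow_zero, mul_one] at hU1 hU
  linear_combination hsum.unique hasSum_zero + b * hU1 - a * hU + h0

theorem Differentiable.hasDerivAt_comp_const_mul {g : ℂ → ℂ} (hg : Differentiable ℂ g) (c z : ℂ) :
    HasDerivAt (fun w => g (c * w)) (c * _root_.deriv g (c * z)) z := by
  refine ((hg (c * z)).hasDerivAt.comp z ((hasDerivAt_id z).const_mul c)).congr_deriv ?_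
  rw [mul_one, mul_comm]

noncomputable def dampedEigenfunction (u : ℂ → ℂ) (lam z : ℂ) : ℂ :=
  z * Complex.exp (lam * z) * u (-2 * lam * z)

theorem hasDerivAt_dampedEigenfunction {u : ℂ → ℂ} (hu : Differentiable ℂ u) (lam z : ℂ) :
    HasDerivAt (dampedEigenfunction u lam) (Complex.exp (lam * z) *
      ((1 + lam * z) * u (-2 * lam * z) - 2 * lam * z * deriv u (-2 * lam * z))) z := by
  have hexp := ((hasDerivAt_id z).const_mul lam).cexp
  refine (((hasDerivAt_id z).mul hexp).mul
    (hu.hasDerivAt_comp_const_mul (-2 * lam) z)).congr_deriv ?_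
  simp only [Pi.mul_apply, id]
  ring

theorem hasDerivAt_deriv_dampedEigenfunction {u : ℂ → ℂ} (hu : Differentiable ℂ u)
    (hu' : Differentiable ℂ (deriv u)) (lam z : ℂ) :
    HasDerivAt (deriv (dampedEigenfunction u lam)) (Complex.exp (lam * z) *
      (lam * (2 + lam * z) * u (-2 * lam * z) - 4 * lam * (1 + lam * z) * deriv u (-2 * lam * z)
        + 4 * lam ^ 2 * z * deriv (deriv u) (-2 * lam * z))) z := by
  rw [funext fun w => (hasDerivAt_dampedEigenfunction hu lam w).deriv]
  have hexp := ((hasDerivAt_id z).const_mul lam).cexp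
  have hlin := ((hasDerivAt_id z).const_mul lam).const_add 1
  have hlin' := (hasDerivAt_id z).const_mul (2 * lam)
  refine (hexp.mul ((hlin.mul (hu.hasDerivAt_comp_const_mul (-2 * lam) z)).sub
    (hlin'.mul (hu'.hasDerivAt_comp_const_mul (-2 * lam) z)))).congr_deriv ?_
  simp only [Pi.mul_apply, Pi.sub_apply, id]
  ring

theorem dampedEigenfunction_ode {u : ℂ → ℂ} (hu : Differentiable ℂ u)
    (hu' : Differentiable ℂ (deriv u)) {β : ℂ}
    (hkummer : ∀ ζ, ζ * deriv (deriv u) ζ + (2 - ζ) * deriv u ζ - (1 - β) * u ζ = 0)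
    (lam : ℂ) {z : ℂ} (hz : z ≠ 0) :
    -deriv (deriv (dampedEigenfunction u lam)) z + 2 * lam * β / z * dampedEigenfunction u lam z
      + lam ^ 2 * dampedEigenfunction u lam z = 0 := by
  rw [(hasDerivAt_deriv_dampedEigenfunction hu hu' lam z).deriv, dampedEigenfunction]
  linear_combination 2 * lam * Complex.exp (lam * z) * hkummer (-2 * lam * z)
    + 2 * lam * β * Complex.exp (lam * z) * u (-2 * lam * z) * mul_inv_cancel₀ hz

theorem deriv_deriv_comp_ofReal {F : ℂ → ℂ} (hF : Differentiable ℂ F)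
    (hF' : Differentiable ℂ (deriv F)) (x : ℝ) :
    deriv (deriv fun y : ℝ => F y) x = deriv (deriv F) x := by
  rw [funext fun y : ℝ => (hF y).hasDerivAt.comp_ofReal.deriv]
  exact (hF' x).hasDerivAt.comp_ofReal.deriv

theorem kummer_eigenfunction_general
    (α : ℝ) (lam : ℂ)
    (f : ℝ → ℂ)
    (hf : f = fun x : ℝ => (x : ℂ) * Complex.exp (lam * x) * kummerM (1 - α) 2 (-2 * lam * x)) :
    f 0 = 0 ∧
    (∀ x ∈ Ioo (0:ℝ) 1,
        -(deriv (deriv f) x) + (2 * lam * α / (x : ℂ)) * f x + lam ^ 2 * f x = 0) ∧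
    (f 1 = 0 ↔ kummerM (1 - (α : ℂ)) 2 (-2 * lam) = 0) := by
  have hb : 1 ≤ (2 : ℂ).re := by norm_num
  have hu := differentiable_kummerM hb (1 - α)
  have hu' := differentiable_deriv_kummerM hb (1 - α)
  have hF : Differentiable ℂ (dampedEigenfunction (kummerM (1 - α) 2) lam) :=
    fun z => (hasDerivAt_dampedEigenfunction hu lam z).differentiableAt
  have hF' : Differentiable ℂ (deriv (dampedEigenfunction (kummerM (1 - α) 2) lam)) :=
    fun z => (hasDerivAt_deriv_dampedEigenfunction hu hu' lam z).differentiableAt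
  refine ⟨by simp [hf], fun x hx => ?_, by simp [hf, Complex.exp_ne_zero]⟩
  rw [show f = fun y : ℝ => dampedEigenfunction (kummerM (1 - α) 2) lam y from hf,
    deriv_deriv_comp_ofReal hF hF']
  exact dampedEigenfunction_ode hu hu' (kummerM_ode hb (1 - α)) lam
    (Complex.ofReal_ne_zero.2 hx.1.ne')

/-- The function f_λ(x) = x e^{λx} M(1-α, 2, -2λx) satisfies f_λ(0) = 0, solves
-f'' + (2λα/x)f + λ²f = 0 on (0,1), and f_λ(1) = 0 iff M(1-α, 2, -2λ) = 0. -/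
theorem kummer_eigenfunction
    (α : ℝ) (hα : 0 < α) (lam : ℂ) (hlam : lam ≠ 0)
    (f : ℝ → ℂ)
    (hf : f = fun x : ℝ => (x : ℂ) * Complex.exp (lam * x) * kummerM (1 - α) 2 (-2 * lam * x)) :
    f 0 = 0 ∧
    (∀ x ∈ Ioo (0:ℝ) 1,
        -(deriv (deriv f) x) + (2 * lam * α / (x : ℂ)) * f x + lam ^ 2 * f x = 0) ∧
    (f 1 = 0 ↔ kummerM (1 - (α : ℂ)) 2 (-2 * lam) = 0) :=
  kummer_eigenfunction_general α lam f hf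
end
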